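/- arXiv:1108.3518 — 3 statements merged into one kernel-verified Lean document; each statement's English description precedes it below -/
import Mathlib

section
/- Let ρ, σ be density operators on a finite-dimensional Hilbert space and c ∈ [0,1]. If for every unit vector ξ, c·⟨ξ, σ ξ⟩ ≤ ⟨ξ, ρ ξ⟩, then c ≤ 1 - D(ρ,σ)/2, where D(ρ,σ) = tr|ρ - σ| is the trace distance. -/
open Matrix Complex
open scoped ComplexOrder Classical
noncomputable section

/-- Positive semidefinite square root (0 if not psd). -/
def msqrt {n : Type*} [Fintype n] [DecidableEq n] (A : Matrix n n ℂ) : Matrix n n ℂ :=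
  if h : A.PosSemidef then
    h.isHermitian.eigenvectorUnitary.1 * diagonal ((↑) ∘ (√·) ∘ h.isHermitian.eigenvalues) *
      (star h.isHermitian.eigenvectorUnitary : Matrix n n ℂ)
  else 0

/-- Operator absolute value |A| = √(AᴴA). -/
def matAbs {n : Type*} [Fintype n] [DecidableEq n] (A : Matrix n n ℂ) : Matrix n n ℂ :=
  msqrt (Aᴴ * A)

/-- Trace distance D(ρ,σ) = tr|ρ-σ|. -/
def traceDist {n : Type*} [Fintype n] [DecidableEq n] (ρ σ : Matrix n n ℂ) : ℝ :=
  ((matAbs (ρ - σ)).trace).re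

/-- Fidelity F(ρ,σ) = tr √(√ρ σ √ρ). -/
def mFidelity {n : Type*} [Fintype n] [DecidableEq n] (ρ σ : Matrix n n ℂ) : ℝ :=
  ((msqrt (msqrt ρ * σ * msqrt ρ)).trace).re

/-- A density matrix: positive semidefinite with unit trace. -/
def IsDensity {n : Type*} [Fintype n] [DecidableEq n] (ρ : Matrix n n ℂ) : Prop :=
  ρ.PosSemidef ∧ ρ.trace = 1

open scoped MatrixOrder

/-!
Diagonalise the Hermitian matrix `ρ - σ` in an orthonormal eigenbasis `(uᵢ)`. The diagonal entries
`rᵢ = ⟨uᵢ, ρ uᵢ⟩` and `sᵢ = ⟨uᵢ, σ uᵢ⟩` are probability vectors whose differences `rᵢ - sᵢ` are the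
eigenvalues of `ρ - σ`, so `tr|ρ - σ| = ∑ |rᵢ - sᵢ|`. Testing the domination on the `uᵢ` gives
`c sᵢ ≤ rᵢ`; summing forces `c ≤ 1`, hence `c sᵢ ≤ min rᵢ sᵢ`, and
`∑ min rᵢ sᵢ = 1 - ½ ∑ |rᵢ - sᵢ|`.
-/

theorem le_sum_min_of_mul_le {ι : Type*} [Fintype ι] {r s : ι → ℝ} {c : ℝ}
    (hs : ∀ i, 0 ≤ s i) (hr1 : ∑ i, r i = 1) (hs1 : ∑ i, s i = 1) (h : ∀ i, c * s i ≤ r i) :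
    c ≤ ∑ i, min (r i) (s i) := by
  have hc : c ≤ 1 := by
    simpa [← Finset.mul_sum, hr1, hs1] using Finset.sum_le_sum fun i (_ : i ∈ Finset.univ) => h i
  calc c = ∑ i, c * s i := by rw [← Finset.mul_sum, hs1, mul_one]
    _ ≤ ∑ i, min (r i) (s i) :=
      Finset.sum_le_sum fun i _ => le_min (h i) (mul_le_of_le_one_left (hs i) hc)

theorem sum_min_eq_one_sub_half_sum_abs_sub {ι : Type*} [Fintype ι] {r s : ι → ℝ}
    (hr1 : ∑ i, r i = 1) (hs1 : ∑ i, s i = 1) :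
    ∑ i, min (r i) (s i) = 1 - (∑ i, |r i - s i|) / 2 := by
  have hmin : ∀ i, min (r i) (s i) = (r i + s i - |r i - s i|) / 2 := by
    intro i
    rw [abs_sub_comm, ← two_nsmul_inf_eq_add_sub_abs_sub, two_nsmul]
    ring
  simp only [hmin, ← Finset.sum_div, Finset.sum_sub_distrib, Finset.sum_add_distrib, hr1, hs1]
  ring

section OrthonormalBasis

variable {𝕜 ι n : Type*} [RCLike 𝕜] [Fintype ι] [Fintype n]

theorem OrthonormalBasis.star_dotProduct_self (b : OrthonormalBasis ι 𝕜 (EuclideanSpace 𝕜 n))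
    (i : ι) : star ⇑(b i) ⬝ᵥ ⇑(b i) = 1 := by
  rw [dotProduct_comm, ← EuclideanSpace.inner_eq_star_dotProduct, inner_self_eq_norm_sq_to_K,
    b.norm_eq_one]
  simp

theorem OrthonormalBasis.sum_star_dotProduct_mulVec [DecidableEq n]
    (b : OrthonormalBasis ι 𝕜 (EuclideanSpace 𝕜 n)) (M : Matrix n n 𝕜) :
    ∑ i, star ⇑(b i) ⬝ᵥ (M *ᵥ ⇑(b i)) = M.trace := by
  rw [← trace_toLin_eq M (EuclideanSpace.basisFun n 𝕜).toBasis,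
    ← toEuclideanLin_eq_toLin_orthonormal, LinearMap.trace_eq_sum_inner _ b]
  simp [EuclideanSpace.inner_eq_star_dotProduct, dotProduct_comm]

end OrthonormalBasis

namespace Matrix.IsHermitian

variable {𝕜 n : Type*} [RCLike 𝕜] [Fintype n] [DecidableEq n] {A : Matrix n n 𝕜}

theorem star_dotProduct_mulVec_eigenvectorBasis (hA : A.IsHermitian) (i : n) :
    star ⇑(hA.eigenvectorBasis i) ⬝ᵥ (A *ᵥ ⇑(hA.eigenvectorBasis i)) = hA.eigenvalues i := by
  rw [hA.mulVec_eigenvectorBasis, dotProduct_smul, OrthonormalBasis.star_dotProduct_self,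
    RCLike.real_smul_eq_coe_mul, mul_one]

theorem trace_abs (hA : A.IsHermitian) :
    (CFC.abs A).trace = ∑ i, ((|hA.eigenvalues i| : ℝ) : 𝕜) := by
  rw [CFC.abs_eq_cfc_norm A hA.isSelfAdjoint, hA.cfc_eq, IsHermitian.cfc,
    Unitary.conjStarAlgAut_apply, trace_mul_cycle, Unitary.coe_star_mul_self, one_mul,
    trace_diagonal]
  simp

end Matrix.IsHermitian

theorem msqrt_eq_sqrt {n : Type*} [Fintype n] [DecidableEq n] {A : Matrix n n ℂ}
    (hA : A.PosSemidef) : msqrt A = CFC.sqrt A := by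
  rw [msqrt, dif_pos hA, CFC.sqrt_eq_real_sqrt A hA.nonneg, cfcₙ_eq_cfc, hA.1.cfc_eq]
  rfl

theorem matAbs_eq_abs {n : Type*} [Fintype n] [DecidableEq n] (A : Matrix n n ℂ) :
    matAbs A = CFC.abs A :=
  msqrt_eq_sqrt (posSemidef_conjTranspose_mul_self A)

theorem traceDist_eq_sum_abs_eigenvalues {n : Type*} [Fintype n] [DecidableEq n]
    {ρ σ : Matrix n n ℂ} (h : (ρ - σ).IsHermitian) :
    traceDist ρ σ = ∑ i, |h.eigenvalues i| := by
  rw [traceDist, matAbs_eq_abs, h.trace_abs, ← RCLike.ofReal_sum]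
  exact Complex.ofReal_re _

theorem le_one_sub_half_traceDist_of_dominates_general {n : Type*} [Fintype n] [DecidableEq n]
    (ρ σ : Matrix n n ℂ) (hρ : IsDensity ρ) (hσ : IsDensity σ)
    (c : ℝ)
    (hdom : ∀ ξ : n → ℂ, star ξ ⬝ᵥ ξ = 1 →
      c * (star ξ ⬝ᵥ (σ *ᵥ ξ)).re ≤ (star ξ ⬝ᵥ (ρ *ᵥ ξ)).re) :
    c ≤ 1 - traceDist ρ σ / 2 := by
  obtain ⟨hρ, hρ1⟩ := hρ
  obtain ⟨hσ, hσ1⟩ := hσ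
  have hA : (ρ - σ).IsHermitian := hρ.1.sub hσ.1
  set b := hA.eigenvectorBasis
  set r : n → ℝ := fun i => (star ⇑(b i) ⬝ᵥ (ρ *ᵥ ⇑(b i))).re
  set s : n → ℝ := fun i => (star ⇑(b i) ⬝ᵥ (σ *ᵥ ⇑(b i))).re
  have hrs : ∀ i, r i - s i = hA.eigenvalues i := fun i => by
    simpa [r, s, sub_mulVec, dotProduct_sub] using
      congrArg Complex.re (hA.star_dotProduct_mulVec_eigenvectorBasis i)
  have hsum : ∀ M : Matrix n n ℂ, M.trace = 1 → ∑ i, (star ⇑(b i) ⬝ᵥ (M *ᵥ ⇑(b i))).re = 1 :=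
    fun M hM => by rw [← Complex.re_sum, b.sum_star_dotProduct_mulVec, hM, Complex.one_re]
  have hD : traceDist ρ σ = ∑ i, |r i - s i| := by
    simp only [hrs]
    exact traceDist_eq_sum_abs_eigenvalues hA
  rw [hD, ← sum_min_eq_one_sub_half_sum_abs_sub (hsum ρ hρ1) (hsum σ hσ1)]
  exact le_sum_min_of_mul_le (fun i => hσ.re_dotProduct_nonneg _) (hsum ρ hρ1) (hsum σ hσ1)
    fun i => hdom _ (b.star_dotProduct_self i)

/-- Uniform quadratic-form domination c·σ ≤ ρ implies c ≤ 1 - D(ρ,σ)/2. -/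
theorem le_one_sub_half_traceDist_of_dominates {n : Type*} [Fintype n] [DecidableEq n]
    (ρ σ : Matrix n n ℂ) (hρ : IsDensity ρ) (hσ : IsDensity σ)
    (c : ℝ) (hc0 : 0 ≤ c) (hc1 : c ≤ 1)
    (hdom : ∀ ξ : n → ℂ, star ξ ⬝ᵥ ξ = 1 →
      c * (star ξ ⬝ᵥ (σ *ᵥ ξ)).re ≤ (star ξ ⬝ᵥ (ρ *ᵥ ξ)).re) :
    c ≤ 1 - traceDist ρ σ / 2 :=
  le_one_sub_half_traceDist_of_dominates_general ρ σ hρ hσ c hdom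

end
end

section
/- Let H be a self-adjoint operator on a finite-dimensional Hilbert space and φ a unit vector, with ΔH := √(⟨φ, H²φ⟩ - ⟨φ, Hφ⟩²). Then for all t with 0 ≤ t·ΔH ≤ π/2, |⟨exp(-itH)φ, φ⟩| ≥ cos(ΔH·t). -/
/-! Diagonalising `H`, the state `φ` becomes a probability distribution `w` on the eigenvalues
`λₖ` of `H`, with mean `μ` and variance `ΔH²`, and the survival amplitude becomes its
characteristic function `∑ₖ wₖ exp(-itλₖ)`. After the rotation by `exp(itμ)`, its real part is
`∑ₖ wₖ cos yₖ` with `yₖ = t(μ - λₖ)` and `∑ₖ wₖ yₖ² = a²`, `a = tΔH`. For `0 ≤ a ≤ π/2` the even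
parabola `cos a + (sin a / 2a)(a² - y²)`, tangent to `cos` at `±a`, lies below `cos`, and its
`w`-average is exactly `cos a`. -/

open Matrix Kronecker Complex
open scoped ComplexOrder Classical
noncomputable section

/-- Unitary evolution exp(-itA) generated by a Hamiltonian A (ℏ = 1). -/
def Uev {N : Type*} [Fintype N] [DecidableEq N] (A : Matrix N N ℂ) (t : ℝ) :
    Matrix N N ℂ := NormedSpace.exp ((-(t:ℂ) * Complex.I) • A)

/-- Energy uncertainty ΔH = √(⟨φ,H²φ⟩ - ⟨φ,Hφ⟩²). -/
def energyVar {N : Type*} [Fintype N] [DecidableEq N] (H : Matrix N N ℂ) (φ : N → ℂ) : ℝ :=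
  Real.sqrt ((star φ ⬝ᵥ (H *ᵥ (H *ᵥ φ))).re - ((star φ ⬝ᵥ (H *ᵥ φ)).re) ^ 2)

/-- Tensor product of vectors. -/
def tvec {n m : Type*} (φ : n → ℂ) (Ω : m → ℂ) : n × m → ℂ := fun p => φ p.1 * Ω p.2

lemma Finset.sum_mul_sub_sq_of_sum_eq_one {ι : Type*} {s : Finset ι} {w : ι → ℝ}
    (hw : ∑ i ∈ s, w i = 1) (x : ι → ℝ) :
    ∑ i ∈ s, w i * (x i - ∑ j ∈ s, w j * x j) ^ 2
      = ∑ i ∈ s, w i * x i ^ 2 - (∑ i ∈ s, w i * x i) ^ 2 := by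
  set μ := ∑ j ∈ s, w j * x j
  rw [Finset.sum_congr rfl fun i _ ↦ show w i * (x i - μ) ^ 2
      = w i * x i ^ 2 - 2 * μ * (w i * x i) + μ ^ 2 * w i by ring,
    Finset.sum_add_distrib, Finset.sum_sub_distrib, ← Finset.mul_sum, ← Finset.mul_sum, hw]
  ring

namespace Real

lemma mul_sin_le_mul_sin {x y : ℝ} (hx : 0 ≤ x) (hxy : x ≤ y) (hy : y ≤ π) :
    x * sin y ≤ y * sin x := by
  rcases (hx.trans hxy).eq_or_lt with rfl | hy0
  · simp [le_antisymm hxy hx]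
  have hconc := strictConcaveOn_sin_Icc.concaveOn.2 ⟨le_rfl, pi_pos.le⟩ ⟨hy0.le, hy⟩
    (sub_nonneg.2 (div_le_one_of_le₀ hxy hy0.le)) (div_nonneg hx hy0.le)
    (sub_add_cancel 1 (x / y))
  simp only [smul_eq_mul, mul_zero, zero_add, sin_zero, div_mul_cancel₀ x hy0.ne'] at hconc
  calc x * sin y = y * (x / y * sin y) := by field_simp
    _ ≤ y * sin x := mul_le_mul_of_nonneg_left hconc hy0.le

lemma mul_sin_le_mul_sin_of_le_pi_div_two {a u : ℝ} (ha0 : 0 ≤ a) (ha : a ≤ π / 2)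
    (hau : a ≤ u) : a * sin u ≤ u * sin a := by
  rcases le_total u (π / 2) with hu | hu
  · exact mul_sin_le_mul_sin ha0 hau (by linarith [pi_pos])
  · have hjordan := mul_le_sin ha0 ha
    calc a * sin u ≤ a := mul_le_of_le_one_right ha0 (sin_le_one u)
      _ = π / 2 * (2 / π * a) := by field_simp
      _ ≤ u * sin a := mul_le_mul hu hjordan (by positivity) (by linarith [pi_pos])

lemma sinc_nonneg_of_le_pi {a : ℝ} (ha0 : 0 ≤ a) (ha : a ≤ π) : 0 ≤ sinc a := by
  rw [sinc_apply]
  split_ifs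
  · exact zero_le_one
  · exact div_nonneg (sin_nonneg_of_nonneg_of_le_pi ha0 ha) ha0

/-- `g u = cos u + sinc a / 2 * u ^ 2` is minimal at `u = a` on `[0, ∞)`: its derivative
`sinc a * u - sin u` has the sign of `u - a` because `sin u / u` decreases past `sin a / a`. -/
lemma cos_add_sinc_mul_sq_sub_sq_le_cos {a : ℝ} (ha0 : 0 ≤ a) (ha : a ≤ π / 2) (y : ℝ) :
    cos a + sinc a / 2 * (a ^ 2 - y ^ 2) ≤ cos y := by
  rcases ha0.eq_or_lt with rfl | ha0
  · nlinarith [one_sub_sq_div_two_le_cos (x := y), cos_zero, sinc_zero]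
  set g : ℝ → ℝ := fun u ↦ cos u + sinc a / 2 * u ^ 2
  have hg : ∀ u, HasDerivAt g (-sin u + sinc a * u) u := fun u ↦
    ((hasDerivAt_cos u).add ((hasDerivAt_pow 2 u).const_mul (sinc a / 2))).congr_deriv
      (by push_cast; ring)
  have hsinc : sinc a * a = sin a := by rw [sinc_of_ne_zero ha0.ne', div_mul_cancel₀ _ ha0.ne']
  have hcont : Continuous g := by fun_prop
  have hdiff : ∀ s : Set ℝ, DifferentiableOn ℝ g s :=
    fun s u _ ↦ (hg u).differentiableAt.differentiableWithinAt
  have hanti : AntitoneOn g (Set.Icc 0 a) := by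
    refine antitoneOn_of_deriv_nonpos (convex_Icc 0 a) hcont.continuousOn (hdiff _)
      fun u hu ↦ ?_
    rw [interior_Icc] at hu
    rw [(hg u).deriv]
    have := mul_sin_le_mul_sin hu.1.le hu.2.le (by linarith [pi_pos])
    have : sinc a * u ≤ sin u :=
      le_of_mul_le_mul_right (by rw [mul_right_comm, hsinc]; linarith) ha0
    linarith
  have hmono : MonotoneOn g (Set.Ici a) := by
    refine monotoneOn_of_deriv_nonneg (convex_Ici a) hcont.continuousOn (hdiff _)
      fun u hu ↦ ?_
    rw [interior_Ici] at hu
    rw [(hg u).deriv]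
    have := mul_sin_le_mul_sin_of_le_pi_div_two ha0.le ha (le_of_lt hu)
    have : sin u ≤ sinc a * u :=
      le_of_mul_le_mul_right (by rw [mul_right_comm _ u, hsinc]; linarith) ha0
    linarith
  have hmin : g a ≤ g |y| := by
    rcases le_total |y| a with hy | hy
    · exact hanti ⟨abs_nonneg y, hy⟩ ⟨ha0.le, le_rfl⟩ hy
    · exact hmono (Set.mem_Ici.2 le_rfl) hy hy
  simp only [g, cos_abs, sq_abs] at hmin
  linarith

variable {ι : Type*} {s : Finset ι} {w : ι → ℝ}

lemma cos_le_sum_mul_cos (hw0 : ∀ i ∈ s, 0 ≤ w i) (hw1 : ∑ i ∈ s, w i = 1) {y : ι → ℝ}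
    {a : ℝ} (ha0 : 0 ≤ a) (ha : a ≤ π / 2) (hy : ∑ i ∈ s, w i * y i ^ 2 ≤ a ^ 2) :
    cos a ≤ ∑ i ∈ s, w i * cos (y i) := by
  have hsinc : 0 ≤ sinc a / 2 :=
    div_nonneg (sinc_nonneg_of_le_pi ha0 (by linarith [pi_pos])) zero_le_two
  calc cos a ≤ cos a + sinc a / 2 * (a ^ 2 - ∑ i ∈ s, w i * y i ^ 2) :=
        le_add_of_nonneg_right (mul_nonneg hsinc (sub_nonneg.2 hy))
    _ = ∑ i ∈ s, w i * (cos a + sinc a / 2 * (a ^ 2 - y i ^ 2)) := by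
        rw [Finset.sum_congr rfl fun i _ ↦ show w i * (cos a + sinc a / 2 * (a ^ 2 - y i ^ 2))
            = (cos a + sinc a / 2 * a ^ 2) * w i - sinc a / 2 * (w i * y i ^ 2) by ring,
          Finset.sum_sub_distrib, ← Finset.mul_sum, ← Finset.mul_sum, hw1]
        ring
    _ ≤ ∑ i ∈ s, w i * cos (y i) := Finset.sum_le_sum fun i hi ↦
        mul_le_mul_of_nonneg_left (cos_add_sinc_mul_sq_sub_sq_le_cos ha0 ha (y i)) (hw0 i hi)

lemma cos_le_norm_sum_mul_exp_mul_I (hw0 : ∀ i ∈ s, 0 ≤ w i) (hw1 : ∑ i ∈ s, w i = 1)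
    {x : ι → ℝ} {a : ℝ} (ha0 : 0 ≤ a) (ha : a ≤ π / 2) (c : ℝ)
    (hx : ∑ i ∈ s, w i * (x i - c) ^ 2 ≤ a ^ 2) :
    cos a ≤ ‖∑ i ∈ s, (w i : ℂ) * Complex.exp (x i * I)‖ := by
  calc cos a ≤ ∑ i ∈ s, w i * cos (x i - c) := cos_le_sum_mul_cos hw0 hw1 ha0 ha hx
    _ = (Complex.exp (↑(-c) * I) * ∑ i ∈ s, (w i : ℂ) * Complex.exp (x i * I)).re := by
        rw [Finset.mul_sum, re_sum]
        refine Finset.sum_congr rfl fun i _ ↦ ?_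
        rw [mul_left_comm, ← Complex.exp_add, ← add_mul, ← ofReal_add, re_ofReal_mul,
          exp_ofReal_mul_I_re, neg_add_eq_sub]
    _ ≤ ‖Complex.exp (↑(-c) * I) * ∑ i ∈ s, (w i : ℂ) * Complex.exp (x i * I)‖ :=
        re_le_norm _
    _ = ‖∑ i ∈ s, (w i : ℂ) * Complex.exp (x i * I)‖ := by
        rw [norm_mul, norm_exp_ofReal_mul_I, one_mul]

end Real

namespace Matrix.IsHermitian

variable {n : Type*} [Fintype n] [DecidableEq n] {A : Matrix n n ℂ} (hA : A.IsHermitian)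

/-- `f(A) = U diag(f ∘ λ) U*`. Mathlib's `cfc` for Hermitian matrices only takes real-valued `f`,
while `exp(-itA)` needs complex values. -/
def funCalc (f : ℝ → ℂ) : Matrix n n ℂ :=
  Unitary.conjStarAlgAut ℂ _ hA.eigenvectorUnitary (diagonal (f ∘ hA.eigenvalues))

/-- `|⟨eₖ, φ⟩|²` for the orthonormal eigenbasis `(eₖ)` of `A`. -/
def spectralWeight (φ : n → ℂ) (k : n) : ℝ :=
  normSq ((star (hA.eigenvectorUnitary : Matrix n n ℂ) *ᵥ φ) k)

lemma funCalc_ofReal : hA.funCalc (↑) = A := hA.spectral_theorem.symm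

lemma funCalc_one : hA.funCalc 1 = 1 := by
  simp [funCalc]

lemma funCalc_mul (f g : ℝ → ℂ) : hA.funCalc f * hA.funCalc g = hA.funCalc (f * g) := by
  simp only [funCalc, ← map_mul, diagonal_mul_diagonal]
  rfl

lemma exp_smul_eq_funCalc (z : ℂ) :
    NormedSpace.exp (z • A) = hA.funCalc fun x ↦ Complex.exp (z * x) := by
  conv_lhs => rw [← hA.funCalc_ofReal, funCalc, ← map_smul]
  set u := hA.eigenvectorUnitary
  rw [funCalc, Unitary.conjStarAlgAut_apply, Unitary.conjStarAlgAut_apply,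
    show (star u : Matrix n n ℂ) = ↑(Unitary.toUnits u)⁻¹ from rfl,
    show (u : Matrix n n ℂ) = ↑(Unitary.toUnits u) from rfl, Matrix.exp_units_conj,
    ← diagonal_smul, exp_diagonal]
  congr 2
  funext k
  rw [Pi.exp_def, ← Complex.exp_eq_exp_ℂ]
  rfl

lemma dotProduct_funCalc_mulVec (f : ℝ → ℂ) (φ : n → ℂ) :
    star φ ⬝ᵥ (hA.funCalc f *ᵥ φ)
      = ∑ k, (hA.spectralWeight φ k : ℂ) * f (hA.eigenvalues k) := by
  set U : Matrix n n ℂ := ↑hA.eigenvectorUnitary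
  have h : star φ ᵥ* U = star (star U *ᵥ φ) := by
    rw [star_mulVec, ← star_eq_conjTranspose, star_star]
  rw [funCalc, Unitary.conjStarAlgAut_apply, ← mulVec_mulVec, ← mulVec_mulVec,
    dotProduct_mulVec, h]
  simp only [dotProduct, mulVec_diagonal, Pi.star_apply, spectralWeight, Function.comp_apply]
  refine Finset.sum_congr rfl fun k _ ↦ ?_
  rw [normSq_eq_conj_mul_self, ← Complex.star_def]
  ring

lemma spectralWeight_nonneg (φ : n → ℂ) (k : n) : 0 ≤ hA.spectralWeight φ k :=
  normSq_nonneg _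

lemma sum_spectralWeight_eq_one {φ : n → ℂ} (hφ : star φ ⬝ᵥ φ = 1) :
    ∑ k, hA.spectralWeight φ k = 1 := by
  have h := hA.dotProduct_funCalc_mulVec 1 φ
  rw [funCalc_one, one_mulVec, hφ] at h
  simp only [Pi.one_apply, mul_one] at h
  exact_mod_cast h.symm

lemma dotProduct_mulVec_eq_sum (φ : n → ℂ) :
    star φ ⬝ᵥ (A *ᵥ φ) = ↑(∑ k, hA.spectralWeight φ k * hA.eigenvalues k) := by
  conv_lhs => rw [← hA.funCalc_ofReal]
  rw [dotProduct_funCalc_mulVec]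
  push_cast
  rfl

lemma dotProduct_mulVec_mulVec_eq_sum (φ : n → ℂ) :
    star φ ⬝ᵥ (A *ᵥ (A *ᵥ φ)) = ↑(∑ k, hA.spectralWeight φ k * hA.eigenvalues k ^ 2) := by
  conv_lhs => rw [mulVec_mulVec, ← hA.funCalc_ofReal, funCalc_mul]
  rw [dotProduct_funCalc_mulVec]
  push_cast
  simp [sq]

lemma energyVar_eq {φ : n → ℂ} (hφ : star φ ⬝ᵥ φ = 1) :
    energyVar A φ = √(∑ k, hA.spectralWeight φ k *
      (hA.eigenvalues k - ∑ j, hA.spectralWeight φ j * hA.eigenvalues j) ^ 2) := by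
  rw [energyVar, hA.dotProduct_mulVec_mulVec_eq_sum, hA.dotProduct_mulVec_eq_sum, ofReal_re,
    ofReal_re, Finset.sum_mul_sub_sq_of_sum_eq_one (hA.sum_spectralWeight_eq_one hφ)]

lemma norm_star_Uev_mulVec_dotProduct (φ : n → ℂ) (t : ℝ) :
    ‖star (Uev A t *ᵥ φ) ⬝ᵥ φ‖
      = ‖∑ k, (hA.spectralWeight φ k : ℂ) * Complex.exp (↑(-t * hA.eigenvalues k) * I)‖ := by
  rw [star_dotProduct, norm_star, Uev, hA.exp_smul_eq_funCalc, dotProduct_funCalc_mulVec]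
  congr! 4
  push_cast
  ring

end Matrix.IsHermitian

/-- Mandelstam–Tamm bound on the survival amplitude:
for 0 ≤ t·ΔH ≤ π/2, |⟨exp(-itH)φ, φ⟩| ≥ cos(ΔH·t). -/
theorem mandelstam_tamm {N : Type*} [Fintype N] [DecidableEq N]
    (H : Matrix N N ℂ) (hH : H.IsHermitian) (φ : N → ℂ) (hφ : star φ ⬝ᵥ φ = 1)
    (t : ℝ) (ht0 : 0 ≤ t * energyVar H φ) (ht1 : t * energyVar H φ ≤ Real.pi / 2) :
    ‖star (Uev H t *ᵥ φ) ⬝ᵥ φ‖ ≥ Real.cos (energyVar H φ * t) := by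
  set w := hH.spectralWeight φ
  set μ := ∑ k, w k * hH.eigenvalues k
  have hvar : ∑ k, w k * (-t * hH.eigenvalues k - -t * μ) ^ 2 = (t * energyVar H φ) ^ 2 := by
    rw [Finset.sum_congr rfl fun k _ ↦ show w k * (-t * hH.eigenvalues k - -t * μ) ^ 2
        = t ^ 2 * (w k * (hH.eigenvalues k - μ) ^ 2) by ring, ← Finset.mul_sum,
      hH.energyVar_eq hφ, mul_pow, Real.sq_sqrt (Finset.sum_nonneg fun k _ ↦
      mul_nonneg (hH.spectralWeight_nonneg φ k) (sq_nonneg _))]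
  rw [ge_iff_le, mul_comm, hH.norm_star_Uev_mulVec_dotProduct]
  exact Real.cos_le_norm_sum_mul_exp_mul_I (fun k _ ↦ hH.spectralWeight_nonneg φ k)
    (hH.sum_spectralWeight_eq_one hφ) ht0 ht1 (-t * μ) hvar.le

end
end

section
/- Let H_c, H_s be Hilbert spaces, H_s and V bounded self-adjoint operators, H_c self-adjoint with spectrum bounded below (or above), H = H_c + H_s + V, and φ_c(0) a unit vector with φ_c(t) = exp(-itH_c)φ_c(0). If V(φ_c(t) ⊗ Ω) = 0 for all t ≤ 0 and all Ω ∈ H_s, then V·exp(-itH)(φ_c(0) ⊗ Ω) = 0 for all t ∈ ℝ and all Ω ∈ H_s. -/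
open Matrix Kronecker Complex
open scoped ComplexOrder Classical
noncomputable section

/-! In finite dimensions every orbit `z ↦ exp (z • A) w` is an entire function of `z`. The free
evolution `exp (-itH₀)` with `H₀ = Hc ⊗ 1 + 1 ⊗ Hs` factorises as `exp (-itHc) ⊗ exp (-itHs)`, so
the hypothesis says that `V` annihilates the free orbit of `φ₀ ⊗ Ω` for `t ≤ 0`; by the identity
theorem it annihilates it for all complex times. Then `exp (itH) exp (-itH₀) (φ₀ ⊗ Ω)` has
derivative `exp (itH) (iV) exp (-itH₀) (φ₀ ⊗ Ω) = 0`, so the full evolution of `φ₀ ⊗ Ω` coincides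
with the free one, which `V` annihilates. -/

open Set Filter Topology NormedSpace

theorem AnalyticOnNhd.eq_zero_of_forall_neg_real {E : Type*} [NormedAddCommGroup E]
    [NormedSpace ℂ E] {f : ℂ → E} (hf : AnalyticOnNhd ℂ f univ)
    (h : ∀ t : ℝ, t < 0 → f t = 0) (z : ℂ) : f z = 0 := by
  have hreal : Tendsto ((↑) : ℝ → ℂ) (𝓝[<] 0) (𝓝[≠] 0) := by
    have := Complex.continuous_ofReal.continuousWithinAt.tendsto_nhdsWithin (s := Iio 0)
      (x := 0) (t := {(0 : ℂ)}ᶜ) fun t ht => Complex.ofReal_ne_zero.2 (ne_of_lt ht)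
    rwa [Complex.ofReal_zero] at this
  have hfreq : ∃ᶠ w in 𝓝[≠] (0 : ℂ), f w = 0 :=
    hreal.frequently (eventually_nhdsWithin_of_forall (s := Iio 0) h).frequently
  exact hf.eqOn_zero_of_preconnected_of_frequently_eq_zero isPreconnected_univ (mem_univ 0) hfreq
    (mem_univ z)

section Perturbation

variable {𝔸 E : Type*} [NormedRing 𝔸] [NormedAlgebra ℂ 𝔸] [CompleteSpace 𝔸]
  [NormedAddCommGroup E] [NormedSpace ℂ E] [Module 𝔸 E] [IsBoundedSMul 𝔸 E]
  [IsScalarTower ℂ 𝔸 E]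

theorem analyticOnNhd_smul_exp_smul_smul (A B : 𝔸) (w : E) :
    AnalyticOnNhd ℂ (fun z : ℂ => B • exp (z • A) • w) univ := fun _ _ =>
  let L : 𝔸 →L[ℂ] E :=
    (ContinuousLinearMap.lsmul ℂ 𝔸 B).comp ((ContinuousLinearMap.lsmul ℂ 𝔸).flip w)
  L.analyticAt _ |>.comp ((exp_analytic (𝕂 := ℂ) _).comp (analyticAt_id.smul analyticAt_const))

theorem exp_smul_add_smul_eq_exp_smul_smul (A B : 𝔸) (w : E)
    (h : ∀ z : ℂ, B • exp (z • A) • w = 0) (z : ℂ) :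
    exp (z • (A + B)) • w = exp (z • A) • w := by
  set F : ℂ → E := fun u => (exp (u • -(A + B)) * exp (u • A)) • w with hF
  have hderiv : ∀ u, HasDerivAt F 0 u := by
    intro u
    have hprod := (hasDerivAt_exp_smul_const (𝕂 := ℂ) (-(A + B)) u).mul
      (hasDerivAt_exp_smul_const' (𝕂 := ℂ) A u)
    refine (hprod.smul_const w).congr_deriv ?_
    rw [show exp (u • -(A + B)) * -(A + B) * exp (u • A) + exp (u • -(A + B)) * (A * exp (u • A))
        = -(exp (u • -(A + B)) * B * exp (u • A)) by noncomm_ring, neg_smul, mul_smul, mul_smul,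
      h u, smul_zero, neg_zero]
  have hconst : F z = F 0 :=
    is_const_of_deriv_eq_zero (fun u => (hderiv u).differentiableAt) (fun u => (hderiv u).deriv) z 0
  -- `exp_add_of_commute` is stated for `ℚ`-algebras
  let := NormedAlgebra.restrictScalars ℚ ℂ 𝔸
  have hF0 : F 0 = w := by simp [hF]
  calc exp (z • (A + B)) • w = exp (z • (A + B)) • F z := by rw [hconst, hF0]
    _ = exp (z • A) • w := by
        rw [hF, ← mul_smul, ← mul_assoc, smul_neg,
          ← NormedSpace.exp_add_of_commute (Commute.refl _).neg_right, add_neg_cancel,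
          NormedSpace.exp_zero, one_mul]

theorem smul_exp_smul_add_smul_eq_zero (A B : 𝔸) (c : ℂ) (w : E)
    (h : ∀ t : ℝ, t < 0 → B • exp ((t : ℂ) • A) • w = 0) (z : ℂ) :
    B • exp (z • (A + c • B)) • w = 0 := by
  have hfree : ∀ z : ℂ, B • exp (z • A) • w = 0 :=
    (analyticOnNhd_smul_exp_smul_smul A B w).eq_zero_of_forall_neg_real h
  rw [exp_smul_add_smul_eq_exp_smul_smul A (c • B) w
    (fun z => by rw [smul_assoc, hfree, smul_zero]) z]
  exact hfree z

end Perturbation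

theorem Continuous.matrix_kronecker {X R l m n p : Type*} [TopologicalSpace X]
    [TopologicalSpace R] [Mul R] [ContinuousMul R] {A : X → Matrix l m R} {B : X → Matrix n p R}
    (hA : Continuous A) (hB : Continuous B) : Continuous fun x => A x ⊗ₖ B x :=
  continuous_matrix fun i j => (hA.matrix_elem i.1 j.1).mul (hB.matrix_elem i.2 j.2)

namespace Matrix

variable {n m : Type*} [Fintype n] [DecidableEq n] [Fintype m] [DecidableEq m]

theorem mulVec_exp_smul_add_smul_mulVec_eq_zero (A B : Matrix n n ℂ) (c : ℂ) (w : n → ℂ)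
    (h : ∀ t : ℝ, t < 0 → B *ᵥ (exp ((t : ℂ) • A) *ᵥ w) = 0) (z : ℂ) :
    B *ᵥ (exp (z • (A + c • B)) *ᵥ w) = 0 :=
  -- matrices carry no global normed-ring structure; the `∞`-operator norm also bounds `*ᵥ`
  open scoped Norms.Operator in
  letI : IsBoundedSMul (Matrix n n ℂ) (n → ℂ) := .of_norm_smul_le linfty_opNorm_mulVec
  smul_exp_smul_add_smul_eq_zero A B c w h z

def kroneckerOneRingHom (R : Type*) [CommSemiring R] :
    Matrix n n R →+* Matrix (n × m) (n × m) R where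
  toFun A := A ⊗ₖ 1
  map_one' := one_kronecker_one
  map_mul' A B := by rw [← mul_kronecker_mul, mul_one]
  map_zero' := zero_kronecker _
  map_add' A B := add_kronecker A B 1

def oneKroneckerRingHom (R : Type*) [CommSemiring R] :
    Matrix m m R →+* Matrix (n × m) (n × m) R where
  toFun B := 1 ⊗ₖ B
  map_one' := one_kronecker_one
  map_mul' A B := by rw [← mul_kronecker_mul, mul_one]
  map_zero' := kronecker_zero _
  map_add' A B := kronecker_add 1 A B

theorem exp_kronecker_one_add_one_kronecker {R : Type*} [RCLike R] (A : Matrix n n R)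
    (B : Matrix m m R) :
    exp (A ⊗ₖ (1 : Matrix m m R) + (1 : Matrix n n R) ⊗ₖ B) = exp A ⊗ₖ exp B := by
  have hcomm : Commute (A ⊗ₖ (1 : Matrix m m R)) ((1 : Matrix n n R) ⊗ₖ B) := by
    simp only [Commute, SemiconjBy, ← mul_kronecker_mul, mul_one, one_mul]
  open scoped Norms.Operator in
  have hA := map_exp (kroneckerOneRingHom (m := m) R)
    (continuous_id.matrix_kronecker continuous_const) A
  open scoped Norms.Operator in
  have hB := map_exp (oneKroneckerRingHom (n := n) R)
    (continuous_const.matrix_kronecker continuous_id) B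
  calc exp (A ⊗ₖ (1 : Matrix m m R) + (1 : Matrix n n R) ⊗ₖ B)
      = exp (A ⊗ₖ (1 : Matrix m m R)) * exp ((1 : Matrix n n R) ⊗ₖ B) :=
        exp_add_of_commute _ _ hcomm
    _ = exp A ⊗ₖ (1 : Matrix m m R) * (1 : Matrix n n R) ⊗ₖ exp B :=
        congrArg₂ (· * ·) hA.symm hB.symm
    _ = exp A ⊗ₖ exp B := by rw [← mul_kronecker_mul, mul_one, one_mul]

end Matrix

theorem kronecker_mulVec_tvec {l n p m : Type*} [Fintype n] [Fintype m] (A : Matrix l n ℂ)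
    (B : Matrix p m ℂ) (φ : n → ℂ) (Ω : m → ℂ) :
    (A ⊗ₖ B) *ᵥ tvec φ Ω = tvec (A *ᵥ φ) (B *ᵥ Ω) := by
  funext p
  simp only [mulVec, dotProduct, tvec, kroneckerMap_apply, Fintype.sum_prod_type,
    Finset.sum_mul_sum]
  exact Finset.sum_congr rfl fun i _ => Finset.sum_congr rfl fun j _ => by ring

theorem Uev_eq_exp {N : Type*} [Fintype N] [DecidableEq N] (A : Matrix N N ℂ) (t : ℝ) :
    Uev A t = exp ((t : ℂ) • (-I • A)) := by
  rw [Uev, smul_smul, neg_mul_comm]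

theorem Uev_kronecker_one_add_one_kronecker {n m : Type*} [Fintype n] [DecidableEq n] [Fintype m]
    [DecidableEq m] (A : Matrix n n ℂ) (B : Matrix m m ℂ) (t : ℝ) :
    Uev (A ⊗ₖ (1 : Matrix m m ℂ) + (1 : Matrix n n ℂ) ⊗ₖ B) t = Uev A t ⊗ₖ Uev B t := by
  rw [Uev, Uev, Uev, smul_add, ← smul_kronecker, ← kronecker_smul,
    Matrix.exp_kronecker_one_add_one_kronecker]

theorem interaction_vanishes_of_semibounded_general {n m : Type*}
    [Fintype n] [DecidableEq n] [Fintype m] [DecidableEq m]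
    (Hc : Matrix n n ℂ) (Hs : Matrix m m ℂ) (V : Matrix (n × m) (n × m) ℂ)
    (φ0 : n → ℂ)
    (hcond : ∀ t : ℝ, t ≤ 0 → ∀ Ω : m → ℂ, V *ᵥ tvec (Uev Hc t *ᵥ φ0) Ω = 0) :
    ∀ t : ℝ, ∀ Ω : m → ℂ,
      V *ᵥ (Uev (Hc ⊗ₖ (1 : Matrix m m ℂ) + (1 : Matrix n n ℂ) ⊗ₖ Hs + V) t *ᵥ
        tvec φ0 Ω) = 0 := by
  intro t Ω
  have hfree : ∀ s : ℝ, s < 0 →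
      V *ᵥ (exp ((s : ℂ) • (-I • (Hc ⊗ₖ (1 : Matrix m m ℂ) + (1 : Matrix n n ℂ) ⊗ₖ Hs))) *ᵥ
        tvec φ0 Ω) = 0 := by
    intro s hs
    rw [← Uev_eq_exp, Uev_kronecker_one_add_one_kronecker, kronecker_mulVec_tvec]
    exact hcond s hs.le _
  have hfull := Matrix.mulVec_exp_smul_add_smul_mulVec_eq_zero _ V (-I) _ hfree t
  rwa [← smul_add, ← Uev_eq_exp] at hfull

/-- Theorem 1 (Hegerfeldt argument): if the clock Hamiltonian has semibounded spectrum
and the interaction vanishes on φ_c(t)⊗Ω for all t ≤ 0, then it vanishes for all times. -/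
theorem interaction_vanishes_of_semibounded {n m : Type*}
    [Fintype n] [DecidableEq n] [Fintype m] [DecidableEq m]
    (Hc : Matrix n n ℂ) (Hs : Matrix m m ℂ) (V : Matrix (n × m) (n × m) ℂ)
    (hHc : Hc.IsHermitian) (hHs : Hs.IsHermitian) (hV : V.IsHermitian)
    (hBdd : BddBelow (spectrum ℝ Hc) ∨ BddAbove (spectrum ℝ Hc))
    (φ0 : n → ℂ) (hφ : star φ0 ⬝ᵥ φ0 = 1)
    (hcond : ∀ t : ℝ, t ≤ 0 → ∀ Ω : m → ℂ, V *ᵥ tvec (Uev Hc t *ᵥ φ0) Ω = 0) :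
    ∀ t : ℝ, ∀ Ω : m → ℂ,
      V *ᵥ (Uev (Hc ⊗ₖ (1 : Matrix m m ℂ) + (1 : Matrix n n ℂ) ⊗ₖ Hs + V) t *ᵥ
        tvec φ0 Ω) = 0 :=
  interaction_vanishes_of_semibounded_general Hc Hs V φ0 hcond

end
end
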